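/- arXiv:1412.3718 — 3 statements merged into one kernel-verified Lean document; each statement's English description precedes it below -/
import Mathlib

section
/- For every even positive integer n, the Bernoulli number B_n plus the sum of 1/p over all primes p such that (p-1) divides n is an integer (the von Staudt–Clausen Theorem). -/
-- For `n > 0` every prime `p` with `(p - 1) ∣ n` satisfies `p ≤ n + 1`, so the finite range
-- loses no terms of the sum.
theorem von_staudt_clausen_general (n : ℕ) (he : Even n) :
    ∃ z : ℤ, bernoulli n +
      ∑ p ∈ (Finset.range (n + 2)).filter (fun p => p.Prime ∧ (p - 1) ∣ n),
        (1 : ℚ) / p = (z : ℚ) := by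
  obtain ⟨k, rfl⟩ := he.two_dvd
  obtain ⟨z, hz⟩ := Bernoulli.vonStaudt_clausen k
  exact ⟨z, hz.symm⟩

/-- Von Staudt–Clausen: for even positive n, B_n + ∑_{p prime, (p-1) ∣ n} 1/p
is an integer.  (Every such prime p satisfies p ≤ n + 1, so the sum may be
taken over the finite range below.) -/
theorem von_staudt_clausen (n : ℕ) (hn : 0 < n) (he : Even n) :
    ∃ z : ℤ, bernoulli n +
      ∑ p ∈ (Finset.range (n + 2)).filter (fun p => p.Prime ∧ (p - 1) ∣ n),
        (1 : ℚ) / p = (z : ℚ) :=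
  von_staudt_clausen_general n he
end

section
/- In a finite directed network with a source s and sink t and nonnegative integer capacities on edges, the maximum value of an s-t flow equals the minimum capacity of an s-t cut (Max-Flow-Min-Cut Theorem). -/
/-!
Take a flow `f` of maximum value; values are bounded by the capacity of the cut `{s}`.
Let `S` be the set of vertices reachable from `s` along residual edges `u → v`, those with
`f u v < cap u v` or `0 < f v u`. If `t ∈ S`, pushing one unit along a residual path
(raising `f u v` or lowering `f v u` on each edge) gives a larger flow, so `S` is an `s`-`t` cut.
No residual edge leaves `S`, so `f` saturates every edge out of `S` and vanishes on every edge
into `S`, whence the value of `f` is the capacity of `S`. Since no flow exceeds any cut,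
`f` is maximum and `S` is minimum.
-/

open Finset

variable {V : Type*} [Fintype V] [DecidableEq V]

/-- A feasible s-t flow: capacity constraints and conservation at internal
vertices. -/
def IsFlow (cap f : V → V → ℕ) (s t : V) : Prop :=
  (∀ u v, f u v ≤ cap u v) ∧
  (∀ v, v ≠ s → v ≠ t → ∑ u, f u v = ∑ w, f v w)

/-- The value of a flow: net flow out of the source. -/
def flowValue (f : V → V → ℕ) (s : V) : ℤ :=
  (∑ w, (f s w : ℤ)) - ∑ u, (f u s : ℤ)

/-- The capacity of the cut (S, Sᶜ). -/
def cutCapacity (cap : V → V → ℕ) (S : Finset V) : ℕ :=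
  ∑ u ∈ S, ∑ v ∈ Sᶜ, cap u v

theorem Relation.ReflTransGen.exists_head_without_revisit {α : Type*} {r : α → α → Prop}
    {a b : α} (h : Relation.ReflTransGen r a b) (hab : a ≠ b) :
    ∃ c, r a c ∧ Relation.ReflTransGen (fun x y => x ≠ a ∧ r x y) c b := by
  induction h with
  | refl => exact absurd rfl hab
  | @tail x y _ hxy ih =>
    by_cases hxa : x = a
    · subst hxa
      exact ⟨y, hxy, .refl⟩
    · obtain ⟨c, hac, hcx⟩ := ih (Ne.symm hxa)
      exact ⟨c, hac, hcx.tail ⟨hxa, hxy⟩⟩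

omit [Fintype V] [DecidableEq V] in
def Residual (cap f : V → V → ℕ) (u v : V) : Prop :=
  f u v < cap u v ∨ 0 < f v u

omit [DecidableEq V] in
theorem isFlow_iff {cap f : V → V → ℕ} {s t : V} :
    IsFlow cap f s t ↔
      (∀ u v, f u v ≤ cap u v) ∧ ∀ v, v ≠ s → v ≠ t → flowValue f v = 0 := by
  refine and_congr Iff.rfl (forall_congr' fun v => imp_congr_right fun _ =>
    imp_congr_right fun _ => ?_)
  rw [flowValue, sub_eq_zero, eq_comm]
  norm_cast

theorem flowValue_eq_of_cast_eq {f g : V → V → ℕ} {u w : V} {d : ℤ}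
    (h : ∀ a b, (g a b : ℤ) = f a b + if a = u ∧ b = w then d else 0) (x : V) :
    flowValue g x = flowValue f x + (if x = u then d else 0) - (if x = w then d else 0) := by
  simp only [flowValue, h, ite_and, sum_add_distrib, sum_ite_irrel, sum_ite_eq', mem_univ,
    if_true, sum_const_zero]
  ring

theorem exists_push {cap f : V → V → ℕ} (hf : ∀ a b, f a b ≤ cap a b) {u w : V}
    (huw : Residual cap f u w) :
    ∃ g : V → V → ℕ, (∀ a b, g a b ≤ cap a b) ∧
      (∀ x, flowValue g x =
        flowValue f x + (if x = u then 1 else 0) - (if x = w then 1 else 0)) ∧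
      ∀ x y, x ≠ u → Residual cap f x y → Residual cap g x y := by
  by_cases hfw : f u w < cap u w
  · refine ⟨fun a b => f a b + if a = u ∧ b = w then 1 else 0, fun a b => ?_,
      flowValue_eq_of_cast_eq fun a b => by push_cast; rfl, fun x y hxu hxy => ?_⟩
    · dsimp only
      split_ifs with h
      · obtain ⟨rfl, rfl⟩ := h
        exact hfw
      · simpa using hf a b
    · simp only [Residual, hxu, false_and, if_false, add_zero] at hxy ⊢
      split_ifs <;> omega
  · have hwu : 0 < f w u := huw.resolve_left hfw
    refine ⟨fun a b => f a b - if a = w ∧ b = u then 1 else 0, fun a b => ?_, fun x => ?_,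
      fun x y hxu hxy => ?_⟩
    · exact (Nat.sub_le _ _).trans (hf a b)
    · rw [flowValue_eq_of_cast_eq (u := w) (w := u) (d := -1) fun a b => ?_]
      · split_ifs <;> ring
      · split_ifs with h
        · obtain ⟨rfl, rfl⟩ := h
          push_cast [Nat.cast_sub hwu]
          ring
        · simp
    · simp only [Residual, hxu, and_false, if_false, Nat.sub_zero] at hxy ⊢
      split_ifs <;> omega

/-- Pushing along the first edge `u → w` only removes residual edges leaving `u`, so a residual
path from `w` that never leaves `u` again survives; the allowed sources `A` shrink each step. -/
theorem exists_augment {cap : V → V → ℕ} {t : V} (A : Finset V) {g : V → V → ℕ} {u : V}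
    (hg : ∀ a b, g a b ≤ cap a b)
    (hut : Relation.ReflTransGen (fun x y => x ∈ A ∧ Residual cap g x y) u t) :
    ∃ g' : V → V → ℕ, (∀ a b, g' a b ≤ cap a b) ∧
      ∀ x, flowValue g' x =
        flowValue g x + (if x = u then 1 else 0) - (if x = t then 1 else 0) := by
  induction A using Finset.strongInduction generalizing g u with
  | H A ih =>
  by_cases hu : u = t
  · subst hu
    exact ⟨g, hg, by simp⟩
  obtain ⟨w, ⟨huA, huw⟩, hwt⟩ := hut.exists_head_without_revisit hu
  obtain ⟨g₁, hg₁, hval₁, hres₁⟩ := exists_push hg huw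
  have hwt₁ : Relation.ReflTransGen (fun x y => x ∈ A.erase u ∧ Residual cap g₁ x y) w t :=
    Relation.ReflTransGen.mono
      (fun x y ⟨hxu, hxA, hxy⟩ => ⟨mem_erase.2 ⟨hxu, hxA⟩, hres₁ x y hxu hxy⟩) _ _ hwt
  obtain ⟨g', hg', hval'⟩ := ih _ (erase_ssubset huA) hg₁ hwt₁
  exact ⟨g', hg', fun x => by rw [hval', hval₁]; ring⟩

theorem IsFlow.exists_flowValue_eq_add_one {cap f : V → V → ℕ} {s t : V} (hst : s ≠ t)
    (hf : IsFlow cap f s t) (hreach : Relation.ReflTransGen (Residual cap f) s t) :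
    ∃ f', IsFlow cap f' s t ∧ flowValue f' s = flowValue f s + 1 := by
  rw [isFlow_iff] at hf
  obtain ⟨g, hg, hval⟩ := exists_augment univ hf.1
    (Relation.ReflTransGen.mono (fun x _ h => ⟨mem_univ x, h⟩) _ _ hreach)
  refine ⟨g, isFlow_iff.2 ⟨hg, fun v hvs hvt => ?_⟩, by simp [hval, hst]⟩
  simp [hval, hvs, hvt, hf.2 v hvs hvt]

theorem sum_flowValue_eq_sum_compl (f : V → V → ℕ) (S : Finset V) :
    ∑ x ∈ S, flowValue f x = ∑ u ∈ S, ∑ v ∈ Sᶜ, ((f u v : ℤ) - f v u) := by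
  have hsplit : ∀ φ : V → ℤ, ∑ y, φ y = ∑ y ∈ S, φ y + ∑ y ∈ Sᶜ, φ y :=
    fun φ => (sum_add_sum_compl S φ).symm
  have hinner : ∑ x ∈ S, ∑ y ∈ S, (f x y : ℤ) = ∑ x ∈ S, ∑ y ∈ S, (f y x : ℤ) :=
    sum_comm
  simp only [flowValue, hsplit, sum_sub_distrib, sum_add_distrib, hinner]
  ring

theorem IsFlow.flowValue_eq_sum_compl {cap f : V → V → ℕ} {s t : V} (hf : IsFlow cap f s t)
    {S : Finset V} (hs : s ∈ S) (ht : t ∉ S) :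
    flowValue f s = ∑ u ∈ S, ∑ v ∈ Sᶜ, ((f u v : ℤ) - f v u) := by
  rw [← sum_flowValue_eq_sum_compl, sum_eq_single_of_mem s hs]
  exact fun v hv hvs => (isFlow_iff.1 hf).2 v hvs (ne_of_mem_of_not_mem hv ht)

theorem IsFlow.flowValue_le_cutCapacity {cap f : V → V → ℕ} {s t : V} (hf : IsFlow cap f s t)
    {S : Finset V} (hs : s ∈ S) (ht : t ∉ S) :
    flowValue f s ≤ cutCapacity cap S := by
  rw [hf.flowValue_eq_sum_compl hs ht, cutCapacity]
  push_cast
  gcongr with u _ v _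
  have := hf.1 u v
  omega

theorem IsFlow.flowValue_eq_cutCapacity {cap f : V → V → ℕ} {s t : V} (hf : IsFlow cap f s t)
    {S : Finset V} (hs : s ∈ S) (ht : t ∉ S)
    (hS : ∀ u ∈ S, ∀ v ∉ S, ¬ Residual cap f u v) :
    flowValue f s = cutCapacity cap S := by
  rw [hf.flowValue_eq_sum_compl hs ht, cutCapacity]
  push_cast
  refine sum_congr rfl fun u hu => sum_congr rfl fun v hv => ?_
  have hcap := hf.1 u v
  have huv := hS u hu v (mem_compl.1 hv)
  simp only [Residual, not_or, not_lt] at huv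
  omega

theorem exists_isFlow_forall_flowValue_le (cap : V → V → ℕ) {s t : V} (hst : s ≠ t) :
    ∃ f, IsFlow cap f s t ∧ ∀ f', IsFlow cap f' s t → flowValue f' s ≤ flowValue f s := by
  obtain ⟨_, ⟨f, hf, rfl⟩, hmax⟩ :=
    Int.exists_greatest_of_bdd (P := fun z => ∃ f, IsFlow cap f s t ∧ flowValue f s = z)
      ⟨cutCapacity cap {s}, by
        rintro _ ⟨f, hf, rfl⟩
        exact hf.flowValue_le_cutCapacity (mem_singleton_self s) (by simpa using hst.symm)⟩
      ⟨0, 0, ⟨fun _ _ => Nat.zero_le _, fun _ _ _ => rfl⟩, by simp [flowValue]⟩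
  exact ⟨f, hf, fun f' hf' => hmax _ ⟨f', hf', rfl⟩⟩

/-- Max-Flow-Min-Cut: there is a feasible flow f and an s-t cut S such that
the value of f equals the capacity of S, f has maximum value among all
feasible flows, and S has minimum capacity among all s-t cuts. -/
theorem max_flow_min_cut (cap : V → V → ℕ) (s t : V) (hst : s ≠ t) :
    ∃ (f : V → V → ℕ) (S : Finset V),
      IsFlow cap f s t ∧ s ∈ S ∧ t ∉ S ∧
      flowValue f s = (cutCapacity cap S : ℤ) ∧
      (∀ f', IsFlow cap f' s t → flowValue f' s ≤ flowValue f s) ∧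
      (∀ S' : Finset V, s ∈ S' → t ∉ S' → cutCapacity cap S ≤ cutCapacity cap S') := by
  classical
  obtain ⟨f, hf, hmax⟩ := exists_isFlow_forall_flowValue_le cap hst
  set S := univ.filter (Relation.ReflTransGen (Residual cap f) s)
  have hs : s ∈ S := mem_filter.2 ⟨mem_univ s, .refl⟩
  have ht : t ∉ S := fun h => by
    obtain ⟨f', hf', hval⟩ := hf.exists_flowValue_eq_add_one hst (mem_filter.1 h).2
    have := hmax f' hf'
    omega
  have hval : flowValue f s = cutCapacity cap S := hf.flowValue_eq_cutCapacity hs ht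
    fun u hu v hv huv => hv (mem_filter.2 ⟨mem_univ v, (mem_filter.1 hu).2.tail huv⟩)
  refine ⟨f, S, hf, hs, ht, hval, hmax, fun S' hs' ht' => ?_⟩
  exact_mod_cast hval ▸ hf.flowValue_le_cutCapacity hs' ht'
end

section
/- For every positive even integer n, the denominator of the Bernoulli number B_n equals the product of all primes p such that (p-1) divides n. -/
/-!
By von Staudt–Clausen, `B_n + ∑ 1/p` over the primes with `(p - 1) ∣ n` is an integer, so `B_n`
has the same denominator as `∑ 1/p`. Denominators multiply when adding rationals whose
denominators are coprime, so that denominator is the product of the primes.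
-/

namespace Rat

theorem den_dvd_den_add_of_coprime {q r : ℚ} (h : q.den.Coprime r.den) : q.den ∣ (q + r).den := by
  have hdvd := add_den_dvd (q + r) (-r)
  rw [add_neg_cancel_right, neg_den] at hdvd
  exact h.dvd_of_dvd_mul_right hdvd

theorem den_add_of_coprime {q r : ℚ} (h : q.den.Coprime r.den) :
    (q + r).den = q.den * r.den := by
  have hq : q.den ∣ (q + r).den := den_dvd_den_add_of_coprime h
  have hr : r.den ∣ (q + r).den := add_comm q r ▸ den_dvd_den_add_of_coprime h.symm
  exact Nat.dvd_antisymm (add_den_dvd q r) (h.mul_dvd_of_dvd_of_dvd hq hr)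

theorem den_sum_of_pairwise_coprime {ι : Type*} (s : Finset ι) (f : ι → ℚ)
    (h : (s : Set ι).Pairwise fun i j => (f i).den.Coprime (f j).den) :
    (∑ i ∈ s, f i).den = ∏ i ∈ s, (f i).den := by
  induction s using Finset.cons_induction with
  | empty => simp
  | cons a s ha ih =>
    rw [Finset.coe_cons, Set.pairwise_insert] at h
    have hcop : (f a).den.Coprime (∑ i ∈ s, f i).den := by
      rw [ih h.1]
      exact Nat.Coprime.prod_right fun i hi => (h.2 i hi (ne_of_mem_of_not_mem hi ha).symm).1
    rw [Finset.sum_cons, Finset.prod_cons, den_add_of_coprime hcop, ih h.1]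

theorem den_sum_one_div_primes (s : Finset ℕ) (hs : ∀ p ∈ s, p.Prime) :
    (∑ p ∈ s, (1 : ℚ) / p).den = ∏ p ∈ s, p := by
  have hden : ∀ p ∈ s, ((1 : ℚ) / p).den = p := fun p hp => by
    rw [one_div, inv_natCast_den, if_neg (hs p hp).ne_zero]
  rw [den_sum_of_pairwise_coprime, Finset.prod_congr rfl hden]
  intro p hp q hq hpq
  simpa only [hden p hp, hden q hq] using
    (Nat.coprime_primes (hs p hp) (hs q hq)).2 hpq

end Rat

theorem bernoulli_denom_general (n : ℕ) (he : Even n) :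
    (bernoulli n).den =
      ∏ p ∈ (Finset.range (n + 2)).filter (fun p => p.Prime ∧ (p - 1) ∣ n), p := by
  obtain ⟨k, rfl⟩ := he.two_dvd
  obtain ⟨z, hz⟩ := Bernoulli.vonStaudt_clausen k
  rw [eq_sub_of_add_eq hz.symm, Rat.intCast_sub_den]
  exact Rat.den_sum_one_div_primes _ fun p hp => (Finset.mem_filter.1 hp).2.1

/-- The denominator of the Bernoulli number B_n, for positive even n, is
the product of all primes p with (p-1) ∣ n (all of which satisfy p ≤ n+1). -/
theorem bernoulli_denom (n : ℕ) (hn : 0 < n) (he : Even n) :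
    (bernoulli n).den =
      ∏ p ∈ (Finset.range (n + 2)).filter (fun p => p.Prime ∧ (p - 1) ∣ n), p :=
  bernoulli_denom_general n he
end
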